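/- arXiv:1511.07268 — 3 statements merged into one kernel-verified Lean document; each statement's English description precedes it below -/
import Mathlib

section
/- For all integers 0 ≤ i < j < k ≤ n, the toric map f̄ satisfies: if i > 0 then f̄(σ(i,j,k)) = σ(i-1, j-1, k-1), and if i = 0 then f̄(σ(0,j,k)) = σ(j-1, k-1, n). -/
/-! On values, `f̄` shifts by `m = [0 π]⁻¹(1)`, applies `[0 π]` and shifts back by one, all
modulo `n + 1`. For `σ(i,j,k)` with `i > 0` we get `m = 1`, so every cut point moves down by one;
for `i = 0` we get `m = k - j + 1`, and the rotation turns the cut at `0` into a cut at `n`. -/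

/-- Auxiliary function: the action of the block transposition with cut points
`(i,j,k)` on `{1,…,n}`, written 1-based. -/
def btFun (i j k t : ℕ) : ℕ :=
  if t ≤ i ∨ k < t then t
  else if t ≤ k - j + i then t + j - i
  else t + j - k

theorem btFun_lb {i j k t : ℕ} (h1 : 1 ≤ t) : 1 ≤ btFun i j k t := by
  unfold btFun; split_ifs <;> omega

theorem btFun_ub {i j k t n : ℕ} (ht : t ≤ n) (hjk : j ≤ k) (hkn : k ≤ n) :
    btFun i j k t ≤ n := by
  unfold btFun; split_ifs <;> omega

theorem btFun_inv {i j k : ℕ} (hij : i < j) (hjk : j < k) (t : ℕ) :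
    btFun i (k - j + i) k (btFun i j k t) = t := by
  unfold btFun; split_ifs <;> omega

theorem btFun_inv' {i j k : ℕ} (hij : i < j) (hjk : j < k) (t : ℕ) :
    btFun i j k (btFun i (k - j + i) k t) = t := by
  have h := btFun_inv (i := i) (j := k - j + i) (k := k) (by omega) (by omega) t
  have e : k - (k - j + i) + i = j := by omega
  rwa [e] at h

/-- The block transposition `σ(i,j,k)` as a permutation of `Fin n`,
where `t : Fin n` encodes the element `t.val + 1` of `{1,…,n}`. -/
def blockT (n i j k : ℕ) (hij : i < j) (hjk : j < k) (hkn : k ≤ n) :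
    Equiv.Perm (Fin n) where
  toFun t := ⟨btFun i j k (t.1 + 1) - 1, by
    have h0 := t.isLt
    have h1 := btFun_lb (i := i) (j := j) (k := k) (t := t.1 + 1) (by omega)
    have h2 := btFun_ub (i := i) (j := j) (k := k) (t := t.1 + 1) (n := n)
      (by omega) (by omega) hkn
    omega⟩
  invFun t := ⟨btFun i (k - j + i) k (t.1 + 1) - 1, by
    have h0 := t.isLt
    have h1 := btFun_lb (i := i) (j := k - j + i) (k := k) (t := t.1 + 1) (by omega)
    have h2 := btFun_ub (i := i) (j := k - j + i) (k := k) (t := t.1 + 1) (n := n)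
      (by omega) (by omega) hkn
    omega⟩
  left_inv t := by
    have h1 := btFun_lb (i := i) (j := j) (k := k) (t := t.1 + 1) (by omega)
    have h2 := btFun_inv hij hjk (t.1 + 1)
    apply Fin.ext
    simp only
    have h3 : btFun i j k (t.1 + 1) - 1 + 1 = btFun i j k (t.1 + 1) := by omega
    rw [h3, h2]
    omega
  right_inv t := by
    have h1 := btFun_lb (i := i) (j := k - j + i) (k := k) (t := t.1 + 1) (by omega)
    have h2 := btFun_inv' hij hjk (t.1 + 1)
    apply Fin.ext
    simp only
    have h3 : btFun i (k - j + i) k (t.1 + 1) - 1 + 1 = btFun i (k - j + i) k (t.1 + 1) := by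
      omega
    rw [h3, h2]
    omega

/-- `T_n`: the set of all block transpositions on `{1,…,n}`. -/
def blockTranspositions (n : ℕ) : Set (Equiv.Perm (Fin n)) :=
  {π | ∃ (i j k : ℕ) (hij : i < j) (hjk : j < k) (hkn : k ≤ n),
      blockT n i j k hij hjk hkn = π}

theorem blockT_inv {n i j k : ℕ} (hij : i < j) (hjk : j < k) (hkn : k ≤ n) :
    (blockT n i j k hij hjk hkn)⁻¹
      = blockT n i (k - j + i) k (by omega) (by omega) hkn :=
  Equiv.ext fun _ => rfl

theorem blockTranspositions_inv_mem {n : ℕ} {π : Equiv.Perm (Fin n)}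
    (h : π ∈ blockTranspositions n) : π⁻¹ ∈ blockTranspositions n := by
  obtain ⟨i, j, k, hij, hjk, hkn, rfl⟩ := h
  exact ⟨i, k - j + i, k, by omega, by omega, hkn, (blockT_inv hij hjk hkn).symm⟩

/-- The Cayley graph `Cay(Sym_n, T_n)`. -/
def cayleyT (n : ℕ) : SimpleGraph (Equiv.Perm (Fin n)) where
  Adj π ρ := π ≠ ρ ∧ π⁻¹ * ρ ∈ blockTranspositions n
  symm := ⟨by
    rintro π ρ ⟨hne, hmem⟩
    refine ⟨hne.symm, ?_⟩
    have h := blockTranspositions_inv_mem hmem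
    rwa [mul_inv_rev, inv_inv] at h⟩
  loopless := ⟨fun π h => h.1 rfl⟩

def ext0 {n : ℕ} (π : Equiv.Perm (Fin n)) : Equiv.Perm (Fin (n + 1)) where
  toFun x := Fin.cases 0 (fun t => (π t).succ) x
  invFun x := Fin.cases 0 (fun t => (π⁻¹ t).succ) x
  left_inv x := by
    cases x using Fin.cases with
    | zero => simp
    | succ t => simp
  right_inv x := by
    cases x using Fin.cases with
    | zero => simp
    | succ t => simp

theorem ext0_zero {n : ℕ} (π : Equiv.Perm (Fin n)) : ext0 π 0 = 0 := by
  simp [ext0]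

open Fin.NatCast

theorem Equiv.Perm.inv_apply_self' {α : Type*} (f : Equiv.Perm α) (x : α) : f⁻¹ (f x) = x :=
  f.symm_apply_apply x

theorem Equiv.Perm.apply_inv_self' {α : Type*} (f : Equiv.Perm α) (x : α) : f (f⁻¹ x) = x :=
  f.apply_symm_apply x

theorem finRotate_pow_apply {n : ℕ} (m : ℕ) (x : Fin (n + 1)) :
    ((finRotate (n + 1)) ^ m) x = x + (m : Fin (n + 1)) := by
  induction m with
  | zero => simp
  | succ m ih =>
      rw [pow_succ', Equiv.Perm.mul_apply, finRotate_apply, ih]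
      push_cast
      first | abel | simp [Nat.cast_succ, add_assoc]

/-- The auxiliary permutation `α^(n+1-r) ∘ [0 π] ∘ α^(π⁻¹(r))` of `{0,1,…,n}`. -/
def toricAux (n r : ℕ) (π : Equiv.Perm (Fin n)) : Equiv.Perm (Fin (n + 1)) :=
  (finRotate (n + 1)) ^ (n + 1 - r) * ext0 π *
    (finRotate (n + 1)) ^ (((ext0 π)⁻¹ (r : Fin (n + 1))) : ℕ)

theorem toricAux_apply_zero (n r : ℕ) (hr : r ≤ n) (π : Equiv.Perm (Fin n)) :
    toricAux n r π 0 = 0 := by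
  unfold toricAux
  have h : r + (n + 1 - r) = n + 1 := by omega
  rw [Equiv.Perm.mul_apply, Equiv.Perm.mul_apply, finRotate_pow_apply,
    finRotate_pow_apply, zero_add, Fin.cast_val_eq_self,
    Equiv.Perm.apply_inv_self', ← Nat.cast_add, h, Fin.natCast_self]

/-- Restriction of a permutation of `{0,1,…,n}` fixing `0` to a permutation of `{1,…,n}`. -/
def unext0 {n : ℕ} (τ : Equiv.Perm (Fin (n + 1))) (h : τ 0 = 0) : Equiv.Perm (Fin n) where
  toFun t := (τ t.succ).pred (by
    intro hc
    exact Fin.succ_ne_zero t (τ.injective (hc.trans h.symm)))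
  invFun t := (τ⁻¹ t.succ).pred (by
    intro hc
    have h' : τ⁻¹ 0 = 0 := by
      conv_lhs => rw [← h]
      exact Equiv.Perm.inv_apply_self' τ 0
    exact Fin.succ_ne_zero t (τ⁻¹.injective (hc.trans h'.symm)))
  left_inv t := by
    apply Fin.succ_injective
    rw [Fin.succ_pred, Fin.succ_pred, Equiv.Perm.inv_apply_self']
  right_inv t := by
    apply Fin.succ_injective
    rw [Fin.succ_pred, Fin.succ_pred, Equiv.Perm.apply_inv_self']

/-- The toric map `f̄_r` on `Sym_n`. -/
def toricMap (n r : ℕ) (hr : r ≤ n) (π : Equiv.Perm (Fin n)) : Equiv.Perm (Fin n) :=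
  unext0 (toricAux n r π) (toricAux_apply_zero n r hr π)

theorem Nat.mod_eq_ite_of_lt_add {a b : ℕ} (h : a < b + b) :
    a % b = if a < b then a else a - b := by
  split_ifs with hab
  · exact Nat.mod_eq_of_lt hab
  · rw [Nat.mod_eq_sub_mod (by omega), Nat.mod_eq_of_lt (by omega)]

section BlockTransposition

variable {n i j k : ℕ} (hij : i < j) (hjk : j < k) (hkn : k ≤ n)

theorem blockT_val_add_one (t : Fin n) :
    (blockT n i j k hij hjk hkn t).val + 1 = btFun i j k (t.val + 1) :=
  Nat.sub_add_cancel (btFun_lb (Nat.succ_pos _))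

theorem ext0_blockT_val (x : Fin (n + 1)) :
    (ext0 (blockT n i j k hij hjk hkn) x).val = btFun i j k x.val := by
  cases x using Fin.cases with
  | zero => simp [ext0_zero, btFun]
  | succ t => simp [ext0, blockT_val_add_one]

end BlockTransposition

theorem toricMap_apply_val_add_one {n r : ℕ} (hr : r ≤ n) (π : Equiv.Perm (Fin n))
    {g : ℕ → ℕ} (hg : ∀ x : Fin (n + 1), (ext0 π x).val = g x.val)
    {m : ℕ} (hm : m ≤ n) (hgm : g m = r) (t : Fin n) :
    (toricMap n r hr π t).val + 1 = (g ((t.val + 1 + m) % (n + 1)) + (n + 1 - r)) % (n + 1) := by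
  have hinv : (ext0 π)⁻¹ (r : Fin (n + 1)) = (m : Fin (n + 1)) := by
    rw [Equiv.Perm.inv_eq_iff_eq]
    ext
    rw [hg, Fin.val_natCast, Fin.val_natCast, Nat.mod_eq_of_lt (by omega),
      Nat.mod_eq_of_lt (by omega), hgm]
  have hne : toricAux n r π t.succ ≠ 0 := by
    rw [← toricAux_apply_zero n r hr π]
    exact (toricAux n r π).injective.ne (Fin.succ_ne_zero t)
  change (toricAux n r π t.succ).val - 1 + 1 = _
  rw [Nat.sub_add_cancel (Nat.pos_of_ne_zero (Fin.val_ne_iff.mpr hne)), toricAux,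
    Equiv.Perm.mul_apply, Equiv.Perm.mul_apply, finRotate_pow_apply, finRotate_pow_apply, hinv,
    Fin.val_add, hg, Fin.val_add]
  simp only [Fin.val_succ, Fin.val_natCast, Nat.mod_mod, Nat.add_mod_mod]

theorem btFun_rotate_of_pos {n i j k t : ℕ} (hi : 0 < i) (hij : i < j) (hjk : j < k)
    (hkn : k ≤ n) (ht : 1 ≤ t) (htn : t ≤ n) :
    (btFun i j k ((t + btFun i (k - j + i) k 1) % (n + 1)) + n) % (n + 1)
      = btFun (i - 1) (j - 1) (k - 1) t := by
  have hm : btFun i (k - j + i) k 1 = 1 := by unfold btFun; split_ifs <;> omega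
  rw [hm]
  have hs := Nat.mod_eq_ite_of_lt_add (a := t + 1) (b := n + 1) (by omega)
  generalize (t + 1) % (n + 1) = s at hs ⊢
  have hsn : s ≤ n := by split_ifs at hs <;> omega
  rw [Nat.mod_eq_ite_of_lt_add (by have := btFun_ub (i := i) hsn hjk.le hkn; omega)]
  unfold btFun
  split_ifs at hs ⊢ <;> omega

theorem btFun_zero_rotate {n j k t : ℕ} (hj : 0 < j) (hjk : j < k) (hkn : k ≤ n)
    (ht : 1 ≤ t) (htn : t ≤ n) :
    (btFun 0 j k ((t + btFun 0 (k - j) k 1) % (n + 1)) + n) % (n + 1)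
      = btFun (j - 1) (k - 1) n t := by
  have hm : btFun 0 (k - j) k 1 = k - j + 1 := by unfold btFun; split_ifs <;> omega
  rw [hm]
  have hs := Nat.mod_eq_ite_of_lt_add (a := t + (k - j + 1)) (b := n + 1) (by omega)
  generalize (t + (k - j + 1)) % (n + 1) = s at hs ⊢
  have hsn : s ≤ n := by split_ifs at hs <;> omega
  rw [Nat.mod_eq_ite_of_lt_add (by have := btFun_ub (i := 0) hsn hjk.le hkn; omega)]
  unfold btFun
  split_ifs at hs ⊢ <;> omega

/-- For all `0 ≤ i < j < k ≤ n`: if `i > 0` then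
`f̄(σ(i,j,k)) = σ(i-1,j-1,k-1)`, and if `i = 0` then `f̄(σ(0,j,k)) = σ(j-1,k-1,n)`. -/
theorem stmt_5 (n i j k : ℕ) (hn : 1 ≤ n) (hij : i < j) (hjk : j < k) (hkn : k ≤ n) :
    (∀ hi : 0 < i, toricMap n 1 hn (blockT n i j k hij hjk hkn)
        = blockT n (i - 1) (j - 1) (k - 1) (by omega) (by omega) (by omega)) ∧
    (∀ _ : i = 0, toricMap n 1 hn (blockT n i j k hij hjk hkn)
        = blockT n (j - 1) (k - 1) n (by omega) (by omega) le_rfl) := by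
  have htoric (t : Fin n) := toricMap_apply_val_add_one hn _ (ext0_blockT_val hij hjk hkn)
    (btFun_ub (by omega) (by omega) hkn) (btFun_inv' hij hjk 1) t
  refine ⟨fun hi => ?_, fun hi => ?_⟩
  · ext t
    exact Nat.add_right_cancel <| (htoric t).trans <|
      (btFun_rotate_of_pos hi hij hjk hkn (by omega) t.isLt).trans
        (blockT_val_add_one _ _ _ t).symm
  · subst hi
    ext t
    exact Nat.add_right_cancel <| (htoric t).trans <|
      (btFun_zero_rotate hij hjk hkn (by omega) t.isLt).trans (blockT_val_add_one _ _ _ t).symm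
end

section
/- Let n ≥ 4. Every clique of the block transposition graph Γ that contains at least two distinct elements of B is contained in B; consequently, B is the unique maximal clique of Γ of size n-1 containing an edge with both endpoints in B. -/
/-- `B`: the set of block transpositions `σ(0,j,n)`, `1 ≤ j ≤ n-1`. -/
def Bset (n : ℕ) : Set (Equiv.Perm (Fin n)) :=
  {π | ∃ (j : ℕ) (h1 : 0 < j) (h2 : j < n), blockT n 0 j n h1 h2 le_rfl = π}

/-- `S^∆`: the block transpositions `σ(i,j,k)` with `i ≠ 0` and `k ≠ n`. -/
def Sset (n : ℕ) : Set (Equiv.Perm (Fin n)) :=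
  {π | ∃ (i j k : ℕ) (hij : i < j) (hjk : j < k) (hkn : k ≤ n),
      i ≠ 0 ∧ k ≠ n ∧ blockT n i j k hij hjk hkn = π}

/-- `L`: the block transpositions `σ(0,j,k)` with `k ≠ n`. -/
def Lset (n : ℕ) : Set (Equiv.Perm (Fin n)) :=
  {π | ∃ (j k : ℕ) (hij : 0 < j) (hjk : j < k) (hkn : k ≤ n),
      k ≠ n ∧ blockT n 0 j k hij hjk hkn = π}

/-- `F`: the block transpositions `σ(i,j,n)` with `i ≠ 0`. -/
def Fset (n : ℕ) : Set (Equiv.Perm (Fin n)) :=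
  {π | ∃ (i j : ℕ) (hij : i < j) (hjn : j < n),
      i ≠ 0 ∧ blockT n i j n hij hjn le_rfl = π}


/-!
The rotations `ρ_x = σ(0,x,n)` form a cyclic group, so `B` is a clique. Conversely, let `σ` lie
in a clique of block transpositions together with `ρ_x ≠ ρ_y`. Then `π = σ⁻¹` is a block
transposition with `π ρ_x, π ρ_y ∈ T_n`. Writing `π = σ(i,j,k) = υ ∘ ρ_d` with `υ ∈ T_n` and
evaluating at the points `1`, `n`, `i+1`, `k-j+1` shows that, unless `i = 0` and `k = n`, the
shift `d` is determined by `(i,j,k)`: `d = n-k+j` if `i = 0`, `d = j-i` if `k = n`, and no `d`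
exists otherwise. Hence `π`, and with it `σ`, is a rotation.
-/

theorem btFun_cases (i j k t : ℕ) :
    ((t ≤ i ∨ k < t) ∧ btFun i j k t = t) ∨
    (i < t ∧ t ≤ k - j + i ∧ btFun i j k t = t + j - i) ∨
    (k - j + i < t ∧ t ≤ k ∧ btFun i j k t = t + j - k) := by
  unfold btFun
  split_ifs <;> omega

theorem btFun_eq_one {i j k t : ℕ} (hij : i < j) (ht : 1 < t)
    (h : btFun i j k t = 1) : i = 0 ∧ t = k - j + 1 := by
  have := btFun_cases i j k t
  omega

theorem btFun_eq_top {i j k t n : ℕ} (hij : i < j) (hjk : j < k) (hkn : k ≤ n) (ht : t < n)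
    (h : btFun i j k t = n) : k = n ∧ t + j = n + i := by
  have := btFun_cases i j k t
  omega

section CompRotation

variable {n i j k i' j' k' d : ℕ}

theorem btFun_eq_comp_rotation_absurd (hij : i < j) (hjk : j < k) (hkn : k < n)
    (hij' : i' < j') (hjk' : j' < k') (hkn' : k' ≤ n) (hd : 0 < d) (hdn : d < n) (hi : 0 < i)
    (H : ∀ s, 1 ≤ s → s ≤ n → btFun i j k s = btFun i' j' k' (btFun 0 d n s)) : False := by
  have h1 := H 1 (by omega) (by omega)
  have hn := H n (by omega) (by omega)
  have hi1 := H (i + 1) (by omega) (by omega)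
  rw [show btFun 0 d n 1 = d + 1 by unfold btFun; split_ifs <;> omega,
    show btFun i j k 1 = 1 by unfold btFun; split_ifs <;> omega] at h1
  rw [show btFun 0 d n n = d by unfold btFun; split_ifs <;> omega,
    show btFun i j k n = n by unfold btFun; split_ifs <;> omega] at hn
  have := btFun_eq_one hij' (by omega) h1.symm
  have := btFun_eq_top hij' hjk' hkn' hdn hn.symm
  -- so `υ = ρ_(n-d)` and `υ ∘ ρ_d` fixes `i + 1`, which `σ(i,j,k)` moves
  have := btFun_cases i j k (i + 1)
  have := btFun_cases 0 d n (i + 1)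
  have := btFun_cases i' j' k' (btFun 0 d n (i + 1))
  omega

theorem btFun_eq_comp_rotation_shift_of_pos (hij : i < j) (hjk : j < k) (hij' : i' < j')
    (hd : 0 < d) (hdk : d < k) (hi : 0 < i)
    (H : ∀ s, 1 ≤ s → s ≤ k → btFun i j k s = btFun i' j' k' (btFun 0 d k s)) :
    d = j - i := by
  have h1 := H 1 (by omega) (by omega)
  have hk := H k (by omega) (by omega)
  have hi1 := H (i + 1) (by omega) (by omega)
  rw [show btFun 0 d k 1 = d + 1 by unfold btFun; split_ifs <;> omega,
    show btFun i j k 1 = 1 by unfold btFun; split_ifs <;> omega] at h1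
  obtain ⟨rfl, hd'⟩ := btFun_eq_one hij' (by omega) h1.symm
  rw [show btFun 0 d k k = d by unfold btFun; split_ifs <;> omega,
    show btFun i j k k = j by unfold btFun; split_ifs <;> omega,
    show btFun 0 j' k' d = k' by unfold btFun; split_ifs <;> omega] at hk
  subst hk
  -- `υ = σ(0,j',j)` sends `ρ_d (i+1)` to `j + 1`, so `ρ_d (i+1) = j + 1`
  have := btFun_cases i j k (i + 1)
  have := btFun_cases 0 d k (i + 1)
  have := btFun_cases 0 j' j (btFun 0 d k (i + 1))
  omega

theorem btFun_eq_comp_rotation_shift_of_lt (hj : 0 < j) (hjk : j < k) (hkn : k < n)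
    (hij' : i' < j') (hjk' : j' < k') (hkn' : k' ≤ n) (hd : 0 < d) (hdn : d < n)
    (H : ∀ s, 1 ≤ s → s ≤ n → btFun 0 j k s = btFun i' j' k' (btFun 0 d n s)) :
    d = n - k + j := by
  have hn := H n (by omega) (by omega)
  have hkj := H (k - j + 1) (by omega) (by omega)
  rw [show btFun 0 d n n = d by unfold btFun; split_ifs <;> omega,
    show btFun 0 j k n = n by unfold btFun; split_ifs <;> omega] at hn
  have := btFun_eq_top hij' hjk' hkn' hdn hn.symm
  rw [show btFun 0 j k (k - j + 1) = 1 by unfold btFun; split_ifs <;> omega] at hkj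
  have := btFun_cases 0 d n (k - j + 1)
  rcases Nat.lt_or_ge 1 (btFun 0 d n (k - j + 1)) with hy | hy
  · have := btFun_eq_one hij' hy hkj.symm
    omega
  · omega

theorem btFun_eq_comp_rotation_cases
    (hij : i < j) (hjk : j < k) (hkn : k ≤ n)
    (hij' : i' < j') (hjk' : j' < k') (hkn' : k' ≤ n) (hd : 0 < d) (hdn : d < n)
    (H : ∀ s, 1 ≤ s → s ≤ n → btFun i j k s = btFun i' j' k' (btFun 0 d n s)) :
    (i = 0 ∧ k = n) ∨ (i = 0 ∧ k < n ∧ d = n - k + j) ∨ (0 < i ∧ k = n ∧ d = j - i) := by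
  rcases Nat.eq_zero_or_pos i with rfl | hi <;> rcases hkn.lt_or_eq with hk | rfl
  · exact Or.inr (Or.inl
      ⟨rfl, hk, btFun_eq_comp_rotation_shift_of_lt hij hjk hk hij' hjk' hkn' hd hdn H⟩)
  · exact Or.inl ⟨rfl, rfl⟩
  · exact (btFun_eq_comp_rotation_absurd hij hjk hk hij' hjk' hkn' hd hdn hi H).elim
  · exact Or.inr (Or.inr ⟨hi, rfl, btFun_eq_comp_rotation_shift_of_pos hij hjk hij' hd hdn hi H⟩)

end CompRotation

theorem blockT_apply_val_add_one {n i j k : ℕ} (hij : i < j) (hjk : j < k) (hkn : k ≤ n)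
    (t : Fin n) : (blockT n i j k hij hjk hkn t : ℕ) + 1 = btFun i j k (t + 1) :=
  Nat.sub_add_cancel (btFun_lb (Nat.le_add_left 1 t))

theorem blockT_eq_mul_iff {n i j k i' j' k' i'' j'' k'' : ℕ}
    (hij : i < j) (hjk : j < k) (hkn : k ≤ n) (hij' : i' < j') (hjk' : j' < k') (hkn' : k' ≤ n)
    (hij'' : i'' < j'') (hjk'' : j'' < k'') (hkn'' : k'' ≤ n) :
    blockT n i j k hij hjk hkn
        = blockT n i' j' k' hij' hjk' hkn' * blockT n i'' j'' k'' hij'' hjk'' hkn'' ↔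
      ∀ s, 1 ≤ s → s ≤ n → btFun i j k s = btFun i' j' k' (btFun i'' j'' k'' s) := by
  constructor
  · intro h s hs hsn
    have := congrArg (fun π : Equiv.Perm (Fin n) => (π ⟨s - 1, by omega⟩ : ℕ) + 1) h
    simpa only [Equiv.Perm.mul_apply, blockT_apply_val_add_one, Nat.sub_add_cancel hs] using this
  · refine fun H => Equiv.ext fun t => Fin.ext ?_
    have := H (t + 1) (Nat.le_add_left 1 t) t.isLt
    rw [← blockT_apply_val_add_one, ← blockT_apply_val_add_one, ← blockT_apply_val_add_one]
      at this
    simpa only [Equiv.Perm.mul_apply, Nat.add_right_cancel_iff] using this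

theorem blockT_mem_Bset {n i j k : ℕ} (hij : i < j) (hjk : j < k) (hkn : k ≤ n)
    (hi : i = 0) (hk : k = n) : blockT n i j k hij hjk hkn ∈ Bset n := by
  subst hi hk
  exact ⟨j, hij, hjk, rfl⟩

theorem inv_mem_Bset {n : ℕ} {π : Equiv.Perm (Fin n)} (h : π ∈ Bset n) : π⁻¹ ∈ Bset n := by
  obtain ⟨x, hx, hxn, rfl⟩ := h
  rw [blockT_inv]
  exact blockT_mem_Bset _ _ _ rfl rfl

theorem mul_mem_Bset {n x y : ℕ} (hx : 0 < x) (hxn : x < n) (hy : 0 < y) (hyn : y < n)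
    (hxy : x + y ≠ n) :
    blockT n 0 x n hx hxn le_rfl * blockT n 0 y n hy hyn le_rfl ∈ Bset n := by
  refine ⟨if x + y < n then x + y else x + y - n, by split_ifs <;> omega,
    by split_ifs <;> omega, ?_⟩
  rw [blockT_eq_mul_iff]
  intro s _ _
  unfold btFun
  split_ifs <;> omega

theorem eq_of_rotation_eq {n x y : ℕ} (hx : 0 < x) (hxn : x < n) (hy : 0 < y) (hyn : y < n)
    (h : blockT n 0 x n hx hxn le_rfl = blockT n 0 y n hy hyn le_rfl) : x = y := by
  have := congrArg (fun π : Equiv.Perm (Fin n) => (π ⟨0, by omega⟩ : ℕ) + 1) h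
  simp only [blockT_apply_val_add_one] at this
  unfold btFun at this
  split_ifs at this <;> omega

theorem ncard_Bset (n : ℕ) : (Bset n).ncard = n - 1 := by
  have hrange : Bset n = Set.range fun x : Set.Ioo 0 n => blockT n 0 x n x.2.1 x.2.2 le_rfl := by
    ext π
    constructor
    · rintro ⟨x, hx, hxn, rfl⟩
      exact ⟨⟨x, hx, hxn⟩, rfl⟩
    · rintro ⟨⟨x, hx, hxn⟩, rfl⟩
      exact ⟨x, hx, hxn, rfl⟩
  rw [hrange, Set.ncard_range_of_injective, Nat.card_coe_set_eq, Set.ncard_Ioo_nat,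
    Nat.sub_zero]
  rintro ⟨x, hx, hxn⟩ ⟨y, hy, hyn⟩ h
  exact Subtype.ext (eq_of_rotation_eq hx hxn hy hyn h)

theorem Bset_subset_blockTranspositions (n : ℕ) : Bset n ⊆ blockTranspositions n := by
  rintro _ ⟨j, hj, hjn, rfl⟩
  exact ⟨0, j, n, hj, hjn, le_rfl, rfl⟩

theorem isClique_Bset (n : ℕ) : (cayleyT n).IsClique (Bset n) := by
  rintro _ ⟨x, hx, hxn, rfl⟩ _ ⟨y, hy, hyn, rfl⟩ hne
  have hxy : x ≠ y := fun h => hne (by subst h; rfl)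
  refine ⟨hne, Bset_subset_blockTranspositions n ?_⟩
  rw [blockT_inv]
  exact mul_mem_Bset _ _ hy hyn (by omega)

theorem mul_rotation_mem_cases {n p q r c : ℕ} (hpq : p < q) (hqr : q < r) (hrn : r ≤ n)
    (hc : 0 < c) (hcn : c < n)
    (h : blockT n p q r hpq hqr hrn * blockT n 0 c n hc hcn le_rfl ∈ blockTranspositions n) :
    (p = 0 ∧ r = n) ∨ (p = 0 ∧ r < n ∧ n - c = n - r + q) ∨ (0 < p ∧ r = n ∧ n - c = q - p) := by
  obtain ⟨i, j, k, hij, hjk, hkn, hυ⟩ := h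
  have hτ : blockT n p q r hpq hqr hrn
      = blockT n i j k hij hjk hkn * (blockT n 0 c n hc hcn le_rfl)⁻¹ := by
    rw [hυ, mul_inv_cancel_right]
  rw [blockT_inv, blockT_eq_mul_iff] at hτ
  exact btFun_eq_comp_rotation_cases hpq hqr hrn hij hjk hkn (by omega) (by omega) hτ

theorem eq_rotation_of_mul_rotation_mem {n p q r x y : ℕ} (hpq : p < q) (hqr : q < r)
    (hrn : r ≤ n) (hx : 0 < x) (hxn : x < n) (hy : 0 < y) (hyn : y < n) (hxy : x ≠ y)
    (hmx : blockT n p q r hpq hqr hrn * blockT n 0 x n hx hxn le_rfl ∈ blockTranspositions n)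
    (hmy : blockT n p q r hpq hqr hrn * blockT n 0 y n hy hyn le_rfl ∈ blockTranspositions n) :
    p = 0 ∧ r = n := by
  have := mul_rotation_mem_cases hpq hqr hrn hx hxn hmx
  have := mul_rotation_mem_cases hpq hqr hrn hy hyn hmy
  omega

theorem subset_Bset_of_isClique {n : ℕ} {s : Set (Equiv.Perm (Fin n))}
    (hsT : s ⊆ blockTranspositions n) (hs : (cayleyT n).IsClique s) {a b : Equiv.Perm (Fin n)}
    (ha : a ∈ s ∩ Bset n) (hb : b ∈ s ∩ Bset n) (hab : a ≠ b) : s ⊆ Bset n := by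
  intro σ hσ
  obtain ⟨has, x, hx, hxn, rfl⟩ := ha
  obtain ⟨hbs, y, hy, hyn, rfl⟩ := hb
  by_cases hσa : σ = blockT n 0 x n hx hxn le_rfl
  · exact hσa ▸ ⟨x, hx, hxn, rfl⟩
  by_cases hσb : σ = blockT n 0 y n hy hyn le_rfl
  · exact hσb ▸ ⟨y, hy, hyn, rfl⟩
  have hxy : x ≠ y := fun h => hab (by subst h; rfl)
  obtain ⟨p, q, r, hpq, hqr, hrn, hπ⟩ := blockTranspositions_inv_mem (hsT hσ)
  have hmx := (hs hσ has hσa).2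
  have hmy := (hs hσ hbs hσb).2
  rw [← hπ] at hmx hmy
  obtain ⟨hp, hr⟩ := eq_rotation_of_mul_rotation_mem hpq hqr hrn hx hxn hy hyn hxy hmx hmy
  rw [← inv_inv σ, ← hπ]
  exact inv_mem_Bset (blockT_mem_Bset hpq hqr hrn hp hr)

/-- For `n ≥ 4`: every clique of `Γ` containing at least two
distinct elements of `B` is contained in `B`; consequently `B` is the unique maximal
clique of `Γ` of size `n-1` containing an edge with both endpoints in `B`. -/
theorem stmt_13 (n : ℕ) (hn : 4 ≤ n) :
    (∀ s : Set (Equiv.Perm (Fin n)), s ⊆ blockTranspositions n →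
      (cayleyT n).IsClique s →
      (∃ a ∈ s ∩ Bset n, ∃ b ∈ s ∩ Bset n, a ≠ b) → s ⊆ Bset n) ∧
    ((cayleyT n).IsClique (Bset n) ∧ (Bset n).ncard = n - 1 ∧
      (∀ t : Set (Equiv.Perm (Fin n)), Bset n ⊆ t → t ⊆ blockTranspositions n →
        (cayleyT n).IsClique t → t = Bset n) ∧
      (∀ s : Set (Equiv.Perm (Fin n)), s ⊆ blockTranspositions n →
        (cayleyT n).IsClique s → s.ncard = n - 1 →
        (∀ t, s ⊆ t → t ⊆ blockTranspositions n → (cayleyT n).IsClique t → t = s) →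
        (∃ a ∈ s ∩ Bset n, ∃ b ∈ s ∩ Bset n, a ≠ b) → s = Bset n)) := by
  have h1 : blockT n 0 1 n one_pos (by omega) le_rfl ∈ Bset n := ⟨1, _, _, rfl⟩
  have h2 : blockT n 0 2 n two_pos (by omega) le_rfl ∈ Bset n := ⟨2, _, _, rfl⟩
  have h12 : blockT n 0 1 n one_pos (by omega) le_rfl ≠ blockT n 0 2 n two_pos (by omega) le_rfl :=
    fun h => absurd (eq_of_rotation_eq _ _ _ _ h) (by decide)
  refine ⟨fun s hsT hs ⟨a, ha, b, hb, hab⟩ => subset_Bset_of_isClique hsT hs ha hb hab,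
    isClique_Bset n, ncard_Bset n, ?_, ?_⟩
  · intro t hBt htT ht
    exact (subset_Bset_of_isClique htT ht ⟨hBt h1, h1⟩ ⟨hBt h2, h2⟩ h12).antisymm hBt
  · rintro s hsT hs - hmax ⟨a, ha, b, hb, hab⟩
    exact (hmax _ (subset_Bset_of_isClique hsT hs ha hb hab)
      (Bset_subset_blockTranspositions n) (isClique_Bset n)).symm
end

section
/- Let n ≥ 5. The block transposition graph Γ is 2(n-2)-regular: every vertex of Γ has exactly 2(n-2) neighbors in Γ. -/
/-!
View `σ(a,b,c)` as the map `btFun a b c` of `ℕ` fixing `0` and everything above `n`. Its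
breakpoints, the `t` with `t + 1` not sent to the successor of the image of `t`, are exactly
`a`, `c - b + a` and `c`. The neighbours of `σ = σ(i,j,k)` are the products `σ ρ` with `ρ` a block
transposition such that `σ ρ` is again one. If `σ` heals no breakpoint of `ρ`, then `σ ρ` has the
breakpoints of `ρ`, hence equals `ρ`, forcing `σ = 1`; and `σ` heals a breakpoint of `ρ` only in
five one-parameter families of triples `(a,b,c)`. With `m = k - j + i` these have sizes `m - 1`,
`k - i - 2`, `n - m - 1`, `i` and `n - k`, in total `2 (n - 2)`.
-/

theorem ncard_inv_mul_mem_eq_ncard_mul_mem {G : Type*} [Group G] {S : Set G} (hS : (1 : G) ∉ S)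
    (σ : G) :
    {τ | τ ∈ S ∧ σ ≠ τ ∧ σ⁻¹ * τ ∈ S}.ncard = {ρ | ρ ∈ S ∧ σ * ρ ∈ S}.ncard := by
  have : {τ | τ ∈ S ∧ σ ≠ τ ∧ σ⁻¹ * τ ∈ S} = (σ * ·) '' {ρ | ρ ∈ S ∧ σ * ρ ∈ S} := by
    ext τ
    refine ⟨fun ⟨hτ, _, hρ⟩ => ⟨σ⁻¹ * τ, ⟨hρ, by simpa using hτ⟩, by simp⟩, ?_⟩
    rintro ⟨ρ, ⟨hρ, hσρ⟩, rfl⟩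
    refine ⟨hσρ, fun h => hS ?_, by simpa using hρ⟩
    rwa [left_eq_mul.mp h] at hρ
  rw [this, Set.ncard_image_of_injective _ (mul_right_injective σ)]

section btFun

variable {i j k : ℕ}

theorem btFun_of_le_or_lt {t : ℕ} (h : t ≤ i ∨ k < t) : btFun i j k t = t := by
  simp [btFun, h]

theorem btFun_breakpoint_values (hij : i < j) (hjk : j < k) :
    btFun i j k i = i ∧ btFun i j k (i + 1) = j + 1 ∧ btFun i j k (k - j + i) = k ∧
      btFun i j k (k - j + i + 1) = i + 1 ∧ btFun i j k k = j ∧ btFun i j k (k + 1) = k + 1 := by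
  unfold btFun; refine ⟨?_, ?_, ?_, ?_, ?_, ?_⟩ <;> split_ifs <;> omega

theorem btFun_add_one_eq_iff (hij : i < j) (hjk : j < k) (t : ℕ) :
    btFun i j k (t + 1) = btFun i j k t + 1 ↔ t ≠ i ∧ t ≠ k - j + i ∧ t ≠ k := by
  unfold btFun; split_ifs <;> omega

theorem btFun_eq_btFun_add_one_cases (hij : i < j) (hjk : j < k) {x y : ℕ}
    (h : btFun i j k y = btFun i j k x + 1) :
    y = x + 1 ∨ (x = i ∧ y = k - j + i + 1) ∨ (x = k - j + i ∧ y = k + 1) ∨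
      (x = k ∧ y = i + 1) := by
  unfold btFun at h; split_ifs at h <;> omega

theorem eq_of_btFun_eq {d e f : ℕ} (hij : i < j) (hjk : j < k) (hde : d < e) (hef : e < f)
    (h : btFun i j k = btFun d e f) : i = d ∧ j = e ∧ k = f := by
  have hbreak (t : ℕ) := (btFun_add_one_eq_iff hij hjk t).symm.trans
    (h ▸ btFun_add_one_eq_iff hde hef t)
  have := hbreak i; have := hbreak (k - j + i); have := hbreak k
  have := hbreak d; have := hbreak (f - e + d); have := hbreak f
  omega

end btFun

section NatLift

variable {n : ℕ}

def IsNatLift (π : Equiv.Perm (Fin n)) (F : ℕ → ℕ) : Prop :=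
  (∀ t, (t = 0 ∨ n < t) → F t = t) ∧ ∀ x : Fin n, F (x + 1) = π x + 1

theorem isNatLift_one : IsNatLift (1 : Equiv.Perm (Fin n)) id :=
  ⟨fun _ _ => rfl, fun _ => rfl⟩

theorem isNatLift_blockT {i j k : ℕ} (hij : i < j) (hjk : j < k) (hkn : k ≤ n) :
    IsNatLift (blockT n i j k hij hjk hkn) (btFun i j k) := by
  refine ⟨fun t ht => btFun_of_le_or_lt (by omega), fun x => ?_⟩
  have := btFun_lb (i := i) (j := j) (k := k) (Nat.le_add_left 1 x)
  show _ = btFun i j k (x + 1) - 1 + 1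
  omega

theorem IsNatLift.mul {π ρ : Equiv.Perm (Fin n)} {F G : ℕ → ℕ} (hπ : IsNatLift π F)
    (hρ : IsNatLift ρ G) : IsNatLift (π * ρ) (F ∘ G) := by
  refine ⟨fun t ht => by simp [hρ.1 t ht, hπ.1 t ht], fun x => ?_⟩
  simp [hρ.2 x, hπ.2 (ρ x)]

theorem IsNatLift.eq_iff {π ρ : Equiv.Perm (Fin n)} {F G : ℕ → ℕ} (hπ : IsNatLift π F)
    (hρ : IsNatLift ρ G) : π = ρ ↔ F = G := by
  constructor
  · rintro rfl
    funext t
    rcases Nat.eq_zero_or_pos t with rfl | ht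
    · rw [hπ.1 0 (Or.inl rfl), hρ.1 0 (Or.inl rfl)]
    rcases le_or_gt t n with htn | htn
    · obtain ⟨x, rfl⟩ : ∃ x : Fin n, (x : ℕ) + 1 = t := ⟨⟨t - 1, by omega⟩, Nat.sub_add_cancel ht⟩
      rw [hπ.2, hρ.2]
    · rw [hπ.1 t (Or.inr htn), hρ.1 t (Or.inr htn)]
  · rintro rfl
    ext x
    have := (hπ.2 x).symm.trans (hρ.2 x)
    omega

end NatLift

section blockT

variable {n i j k : ℕ}

theorem blockT_ne_one (hij : i < j) (hjk : j < k) (hkn : k ≤ n) :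
    blockT n i j k hij hjk hkn ≠ 1 := by
  rw [Ne, (isNatLift_blockT hij hjk hkn).eq_iff isNatLift_one]
  intro h
  have := congrFun h (i + 1)
  simp only [(btFun_breakpoint_values hij hjk).2.1, id_eq, Nat.add_right_cancel_iff] at this
  omega

theorem one_notMem_blockTranspositions (n : ℕ) :
    (1 : Equiv.Perm (Fin n)) ∉ blockTranspositions n :=
  fun ⟨_, _, _, hij, hjk, hkn, h⟩ => blockT_ne_one hij hjk hkn h

theorem eq_of_blockT_eq {d e f : ℕ} {hij : i < j} {hjk : j < k} {hkn : k ≤ n}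
    {hde : d < e} {hef : e < f} {hfn : f ≤ n}
    (h : blockT n i j k hij hjk hkn = blockT n d e f hde hef hfn) : i = d ∧ j = e ∧ k = f :=
  eq_of_btFun_eq hij hjk hde hef <|
    ((isNatLift_blockT hij hjk hkn).eq_iff (isNatLift_blockT hde hef hfn)).mp h

theorem blockT_mul_blockT_eq_iff {a b c d e f : ℕ} {hij : i < j} {hjk : j < k} {hkn : k ≤ n}
    {hab : a < b} {hbc : b < c} {hcn : c ≤ n} {hde : d < e} {hef : e < f} {hfn : f ≤ n} :
    blockT n i j k hij hjk hkn * blockT n a b c hab hbc hcn = blockT n d e f hde hef hfn ↔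
      btFun i j k ∘ btFun a b c = btFun d e f :=
  ((isNatLift_blockT hij hjk hkn).mul (isNatLift_blockT hab hbc hcn)).eq_iff
    (isNatLift_blockT hde hef hfn)

end blockT

def neighborTriples (n i j k : ℕ) : Finset (ℕ × ℕ × ℕ) :=
  ((Finset.range (k - j + i)).erase i).image (fun a => (a, k - j + i, k)) ∪
  ((Finset.Ioo i k).erase (k - j + i)).image (fun b => (i, b, k)) ∪
  ((Finset.Ioc (k - j + i) n).erase k).image (fun c => (i, k - j + i, c)) ∪
  (Finset.range i).image (fun a => (a, i, k - j + i)) ∪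
  (Finset.Ioc k n).image (fun c => (k - j + i, k, c))

theorem mem_neighborTriples {n i j k a b c : ℕ} :
    (a, b, c) ∈ neighborTriples n i j k ↔
      (a ≠ i ∧ a < k - j + i ∧ b = k - j + i ∧ c = k) ∨
      (b ≠ k - j + i ∧ i < b ∧ b < k ∧ a = i ∧ c = k) ∨
      (c ≠ k ∧ k - j + i < c ∧ c ≤ n ∧ a = i ∧ b = k - j + i) ∨
      (a < i ∧ b = i ∧ c = k - j + i) ∨
      (k < c ∧ c ≤ n ∧ a = k - j + i ∧ b = k) := by
  simp only [neighborTriples, Finset.mem_union, Finset.mem_image, Finset.mem_erase,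
    Finset.mem_range, Finset.mem_Ioo, Finset.mem_Ioc, Prod.mk.injEq]
  simp only [and_assoc, existsAndEq, and_true, true_and, eq_comm (a := i), eq_comm (a := k),
    eq_comm (a := k - j + i), or_assoc]

theorem card_neighborTriples {n i j k : ℕ} (hij : i < j) (hjk : j < k) (hkn : k ≤ n) :
    (neighborTriples n i j k).card = 2 * (n - 2) := by
  unfold neighborTriples
  rw [Finset.card_union_of_disjoint, Finset.card_union_of_disjoint,
    Finset.card_union_of_disjoint, Finset.card_union_of_disjoint]
  · repeat rw [Finset.card_image_of_injective _ (fun x y h => by simpa using h)]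
    rw [Finset.card_erase_of_mem (Finset.mem_range.2 (by omega)),
      Finset.card_erase_of_mem (Finset.mem_Ioo.2 (by omega)),
      Finset.card_erase_of_mem (Finset.mem_Ioc.2 (by omega))]
    simp only [Finset.card_range, Nat.card_Ioo, Nat.card_Ioc]
    omega
  all_goals
    rw [Finset.disjoint_left]
    rintro ⟨a, b, c⟩
    simp only [Finset.mem_union, Finset.mem_image, Finset.mem_erase, Finset.mem_range,
      Finset.mem_Ioo, Finset.mem_Ioc, Prod.mk.injEq, existsAndEq, true_and, and_true, not_and,
      and_imp, ne_eq]
    omega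

theorem mem_neighborTriples_of_btFun_comp {n i j k a b c d e f : ℕ} (hij : i < j) (hjk : j < k)
    (hab : a < b) (hbc : b < c) (hcn : c ≤ n) (hde : d < e) (hef : e < f)
    (H : btFun i j k ∘ btFun a b c = btFun d e f) : (a, b, c) ∈ neighborTriples n i j k := by
  rw [mem_neighborTriples]
  have hinv : ¬(a = i ∧ b = k - j + i ∧ c = k) := by
    rintro ⟨rfl, rfl, rfl⟩
    have := congrFun H (d + 1)
    simp only [Function.comp_apply, btFun_inv' hij hjk, (btFun_breakpoint_values hde hef).2.1]
      at this
    omega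
  obtain ⟨r1, r2, r3, r4, r5, r6⟩ := btFun_breakpoint_values hab hbc
  have hsucc (t : ℕ) (ht : t ≠ d ∧ t ≠ f - e + d ∧ t ≠ f) :
      btFun i j k (btFun a b c (t + 1)) = btFun i j k (btFun a b c t) + 1 := by
    simpa only [← Function.comp_apply (f := btFun i j k), H] using
      (btFun_add_one_eq_iff hde hef t).2 ht
  by_cases ha : a ≠ d ∧ a ≠ f - e + d ∧ a ≠ f
  · have := btFun_eq_btFun_add_one_cases hij hjk (hsucc a ha)
    rw [r1, r2] at this
    obtain ⟨rfl, rfl⟩ | ⟨rfl, rfl⟩ : (a = i ∧ b = k - j + i) ∨ (a = k - j + i ∧ b = k) := by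
      omega
    · exact Or.inr <| Or.inr <| Or.inl ⟨fun hc => hinv ⟨rfl, rfl, hc⟩, hbc, hcn, rfl, rfl⟩
    · exact Or.inr <| Or.inr <| Or.inr <| Or.inr ⟨hbc, hcn, rfl, rfl⟩
  by_cases hm : c - b + a ≠ d ∧ c - b + a ≠ f - e + d ∧ c - b + a ≠ f
  · have := btFun_eq_btFun_add_one_cases hij hjk (hsucc _ hm)
    rw [r3, r4] at this
    obtain ⟨rfl, rfl⟩ : a = i ∧ c = k := by omega
    exact Or.inr <| Or.inl ⟨fun hb => hinv ⟨rfl, hb, rfl⟩, hab, hbc, rfl, rfl⟩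
  by_cases hc : c ≠ d ∧ c ≠ f - e + d ∧ c ≠ f
  · have := btFun_eq_btFun_add_one_cases hij hjk (hsucc c hc)
    rw [r5, r6] at this
    obtain ⟨rfl, rfl⟩ | ⟨rfl, rfl⟩ : (b = i ∧ c = k - j + i) ∨ (b = k - j + i ∧ c = k) := by
      omega
    · exact Or.inr <| Or.inr <| Or.inr <| Or.inl ⟨hab, rfl, rfl⟩
    · exact Or.inl ⟨fun ha => hinv ⟨ha, rfl, rfl⟩, hab, rfl, rfl⟩
  -- No breakpoint of `σ(a,b,c)` is healed, so the product is `σ(a,b,c)` and `σ(i,j,k) = 1`.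
  exfalso
  obtain ⟨rfl, rfl, rfl⟩ : a = d ∧ b = e ∧ c = f := by omega
  have := congrFun H (btFun a (c - b + a) c (i + 1))
  simp only [Function.comp_apply, btFun_inv' hab hbc, (btFun_breakpoint_values hij hjk).2.1]
    at this
  omega

theorem lt_lt_le_of_mem_neighborTriples {n i j k a b c : ℕ} (hij : i < j) (hjk : j < k)
    (hkn : k ≤ n) (h : (a, b, c) ∈ neighborTriples n i j k) : a < b ∧ b < c ∧ c ≤ n := by
  rw [mem_neighborTriples] at h
  omega

theorem exists_btFun_comp_of_mem_neighborTriples {n i j k a b c : ℕ} (hij : i < j) (hjk : j < k)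
    (hkn : k ≤ n) (h : (a, b, c) ∈ neighborTriples n i j k) :
    ∃ d e f, d < e ∧ e < f ∧ f ≤ n ∧ btFun i j k ∘ btFun a b c = btFun d e f := by
  rw [mem_neighborTriples] at h
  rcases h with ⟨ha, ham, rfl, rfl⟩ | ⟨hb, hib, hbk, rfl, rfl⟩ | ⟨hc, hmc, hcn, rfl, rfl⟩ |
    ⟨hai, rfl, rfl⟩ | ⟨hkc, hcn, rfl, rfl⟩
  · rcases Nat.lt_or_gt_of_ne ha with hai | hia
    · refine ⟨a, i, j, hai, hij, by omega, ?_⟩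
      funext t; simp only [Function.comp_apply, btFun]; split_ifs <;> omega
    · refine ⟨i, j, a + j - i, hij, by omega, by omega, ?_⟩
      funext t; simp only [Function.comp_apply, btFun]; split_ifs <;> omega
  · rcases Nat.lt_or_gt_of_ne hb with hbm | hmb
    · refine ⟨a, b + j - a, c, by omega, by omega, hkn, ?_⟩
      funext t; simp only [Function.comp_apply, btFun]; split_ifs <;> omega
    · refine ⟨a, b + j - c, c, by omega, by omega, hkn, ?_⟩
      funext t; simp only [Function.comp_apply, btFun]; split_ifs <;> omega
  · rcases Nat.lt_or_gt_of_ne hc with hck | hkc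
    · refine ⟨c + j - k, j, k, by omega, hjk, hkn, ?_⟩
      funext t; simp only [Function.comp_apply, btFun]; split_ifs <;> omega
    · refine ⟨j, k, c, hjk, hkc, hcn, ?_⟩
      funext t; simp only [Function.comp_apply, btFun]; split_ifs <;> omega
  · refine ⟨a, j, k, by omega, hjk, hkn, ?_⟩
    funext t; simp only [Function.comp_apply, btFun]; split_ifs <;> omega
  · refine ⟨i, j, c, hij, by omega, hcn, ?_⟩
    funext t; simp only [Function.comp_apply, btFun]; split_ifs <;> omega

def blockTOf (n : ℕ) (x : ℕ × ℕ × ℕ) : Equiv.Perm (Fin n) :=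
  if h : x.1 < x.2.1 ∧ x.2.1 < x.2.2 ∧ x.2.2 ≤ n then blockT n x.1 x.2.1 x.2.2 h.1 h.2.1 h.2.2
  else 1

theorem blockTOf_eq {n a b c : ℕ} (hab : a < b) (hbc : b < c) (hcn : c ≤ n) :
    blockTOf n (a, b, c) = blockT n a b c hab hbc hcn :=
  dif_pos ⟨hab, hbc, hcn⟩

theorem setOf_blockT_mul_mem_eq_image {n i j k : ℕ} (hij : i < j) (hjk : j < k) (hkn : k ≤ n) :
    {ρ | ρ ∈ blockTranspositions n ∧ blockT n i j k hij hjk hkn * ρ ∈ blockTranspositions n} =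
      blockTOf n '' neighborTriples n i j k := by
  ext ρ
  constructor
  · rintro ⟨⟨a, b, c, hab, hbc, hcn, rfl⟩, ⟨d, e, f, hde, hef, hfn, hτ⟩⟩
    exact ⟨(a, b, c), mem_neighborTriples_of_btFun_comp hij hjk hab hbc hcn hde hef
      (blockT_mul_blockT_eq_iff.mp hτ.symm), blockTOf_eq hab hbc hcn⟩
  · rintro ⟨⟨a, b, c⟩, hx, rfl⟩
    obtain ⟨hab, hbc, hcn⟩ := lt_lt_le_of_mem_neighborTriples hij hjk hkn hx
    obtain ⟨d, e, f, hde, hef, hfn, H⟩ := exists_btFun_comp_of_mem_neighborTriples hij hjk hkn hx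
    rw [blockTOf_eq hab hbc hcn]
    exact ⟨⟨a, b, c, hab, hbc, hcn, rfl⟩,
      ⟨d, e, f, hde, hef, hfn, (blockT_mul_blockT_eq_iff.mpr H).symm⟩⟩

theorem injOn_blockTOf_neighborTriples {n i j k : ℕ} (hij : i < j) (hjk : j < k) (hkn : k ≤ n) :
    Set.InjOn (blockTOf n) (neighborTriples n i j k) := by
  rintro ⟨a, b, c⟩ hx ⟨a', b', c'⟩ hy h
  obtain ⟨hab, hbc, hcn⟩ := lt_lt_le_of_mem_neighborTriples hij hjk hkn hx
  obtain ⟨hab', hbc', hcn'⟩ := lt_lt_le_of_mem_neighborTriples hij hjk hkn hy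
  rw [blockTOf_eq hab hbc hcn, blockTOf_eq hab' hbc' hcn'] at h
  obtain ⟨rfl, rfl, rfl⟩ := eq_of_blockT_eq h
  rfl

theorem stmt_14_general (n : ℕ) :
    ∀ σ ∈ blockTranspositions n,
      {τ | τ ∈ blockTranspositions n ∧ σ ≠ τ ∧
        σ⁻¹ * τ ∈ blockTranspositions n}.ncard = 2 * (n - 2) := by
  rintro σ ⟨i, j, k, hij, hjk, hkn, rfl⟩
  rw [ncard_inv_mul_mem_eq_ncard_mul_mem (one_notMem_blockTranspositions n),
    setOf_blockT_mul_mem_eq_image hij hjk hkn,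
    (injOn_blockTOf_neighborTriples hij hjk hkn).ncard_image, Set.ncard_coe_finset,
    card_neighborTriples hij hjk hkn]

/-- For `n ≥ 5`, the block transposition graph `Γ` is
`2(n-2)`-regular. -/
theorem stmt_14 (n : ℕ) (hn : 5 ≤ n) :
    ∀ σ ∈ blockTranspositions n,
      {τ | τ ∈ blockTranspositions n ∧ σ ≠ τ ∧
        σ⁻¹ * τ ∈ blockTranspositions n}.ncard = 2 * (n - 2) :=
  stmt_14_general n
end
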